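/- Let μ = 4 and let S_+ and S_− be the ℂQ/I-modules with ℂ at every vertex, where for S_+ all α_i act as the identity and all β_i as zero, and for S_− all α_i act as zero and all β_i as the identity. Then for each i = 1,…,4 there is a short exact sequence of ℂQ/I-modules 0 → P(i) → S_+ ⊕ S_− → I(i) → 0, where P(i) and I(i) are the indecomposable projective and injective modules at vertex i. -/

import Mathlib

namespace CHS

/-! ## The path algebra `ℂQ/I`

The quiver `Q` has vertices `0, …, μ-1` (we use `0`-based indices: vertex `i` here is the
vertex `i+1` of the paper), two arrows `a i, b i : i → i+1` (these are `α_{i+1}, β_{i+1}`),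
and the relations kill the mixed composites of consecutive arrows.
We present `ℂQ/I` by generators and relations: the generators are the vertex idempotents
`e i` and the arrows `a i`, `b i`; multiplication `x * y` is "the path `y` followed by the
path `x`" (as for composition of right-multiplication operators on left modules). -/

/-- Generators: vertex idempotents `e i` and arrows `a i, b i : i → i + 1`.
(Arrows are indexed by all of `ℕ`; the out-of-range ones are set to `0` by the relations.) -/
inductive Gen (μ : ℕ) where
  | e (i : Fin μ)
  | a (i : ℕ)
  | b (i : ℕ)

open FreeAlgebra in
/-- The relations of `ℂQ/I`: the `e i` are orthogonal idempotents summing to `1`,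
`a i` (resp. `b i`) is a path from `i` to `i+1`, out-of-range arrows vanish, and the mixed
composites `α_i β_{i+1}` and `β_i α_{i+1}` of consecutive arrows vanish. -/
inductive Rel (μ : ℕ) : FreeAlgebra ℂ (Gen μ) → FreeAlgebra ℂ (Gen μ) → Prop
  | idem (i : Fin μ) : Rel μ (ι ℂ (Gen.e i) * ι ℂ (Gen.e i)) (ι ℂ (Gen.e i))
  | orth (i j : Fin μ) (h : i ≠ j) : Rel μ (ι ℂ (Gen.e i) * ι ℂ (Gen.e j)) 0
  | unit : Rel μ (∑ i : Fin μ, ι ℂ (Gen.e i)) 1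
  | aSupp (i : ℕ) (h : i + 1 < μ) :
      Rel μ (ι ℂ (Gen.a i)) (ι ℂ (Gen.e ⟨i + 1, h⟩) * ι ℂ (Gen.a i) * ι ℂ (Gen.e ⟨i, by omega⟩))
  | aJunk (i : ℕ) (h : ¬ i + 1 < μ) : Rel μ (ι ℂ (Gen.a i)) 0
  | bSupp (i : ℕ) (h : i + 1 < μ) :
      Rel μ (ι ℂ (Gen.b i)) (ι ℂ (Gen.e ⟨i + 1, h⟩) * ι ℂ (Gen.b i) * ι ℂ (Gen.e ⟨i, by omega⟩))
  | bJunk (i : ℕ) (h : ¬ i + 1 < μ) : Rel μ (ι ℂ (Gen.b i)) 0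
  | ab (i : ℕ) : Rel μ (ι ℂ (Gen.a (i + 1)) * ι ℂ (Gen.b i)) 0
  | ba (i : ℕ) : Rel μ (ι ℂ (Gen.b (i + 1)) * ι ℂ (Gen.a i)) 0

/-- The path algebra `ℂQ/I`. -/
abbrev PathAlg (μ : ℕ) := RingQuot (Rel μ)

/-- The idempotent `e i ∈ ℂQ/I` at the vertex `i`. -/
def eE {μ : ℕ} (i : Fin μ) : PathAlg μ :=
  RingQuot.mkAlgHom ℂ (Rel μ) (FreeAlgebra.ι ℂ (Gen.e i))

/-- The arrow `α_{i+1} : i → i+1` as an element of `ℂQ/I`. -/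
def aE {μ : ℕ} (i : ℕ) : PathAlg μ :=
  RingQuot.mkAlgHom ℂ (Rel μ) (FreeAlgebra.ι ℂ (Gen.a i))

/-- The arrow `β_{i+1} : i → i+1` as an element of `ℂQ/I`. -/
def bE {μ : ℕ} (i : ℕ) : PathAlg μ :=
  RingQuot.mkAlgHom ℂ (Rel μ) (FreeAlgebra.ι ℂ (Gen.b i))

theorem eE_idem {μ : ℕ} (i : Fin μ) : eE i * eE i = eE i := by
  simpa [eE, map_mul] using RingQuot.mkAlgHom_rel ℂ (Rel.idem i)

theorem aE_eq {μ : ℕ} (i : ℕ) (h : i + 1 < μ) :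
    aE (μ := μ) i = eE ⟨i + 1, h⟩ * aE i * eE ⟨i, by omega⟩ := by
  simpa [eE, aE, map_mul] using RingQuot.mkAlgHom_rel ℂ (Rel.aSupp i h)

theorem bE_eq {μ : ℕ} (i : ℕ) (h : i + 1 < μ) :
    bE (μ := μ) i = eE ⟨i + 1, h⟩ * bE i * eE ⟨i, by omega⟩ := by
  simpa [eE, bE, map_mul] using RingQuot.mkAlgHom_rel ℂ (Rel.bSupp i h)

theorem aE_mul_eE {μ : ℕ} (i : ℕ) (h : i + 1 < μ) :
    aE (μ := μ) i * eE ⟨i, by omega⟩ = aE i := by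
  conv_lhs => rw [aE_eq i h]
  rw [mul_assoc, mul_assoc, eE_idem, ← mul_assoc, ← aE_eq i h]

theorem bE_mul_eE {μ : ℕ} (i : ℕ) (h : i + 1 < μ) :
    bE (μ := μ) i * eE ⟨i, by omega⟩ = bE i := by
  conv_lhs => rw [bE_eq i h]
  rw [mul_assoc, mul_assoc, eE_idem, ← mul_assoc, ← bE_eq i h]

theorem eE_mul_aE {μ : ℕ} (i : ℕ) (h : i + 1 < μ) :
    eE ⟨i + 1, h⟩ * aE (μ := μ) i = aE i := by
  conv_lhs => rw [aE_eq i h]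
  rw [← mul_assoc, ← mul_assoc, eE_idem, ← aE_eq i h]

theorem eE_mul_bE {μ : ℕ} (i : ℕ) (h : i + 1 < μ) :
    eE ⟨i + 1, h⟩ * bE (μ := μ) i = bE i := by
  conv_lhs => rw [bE_eq i h]
  rw [← mul_assoc, ← mul_assoc, eE_idem, ← bE_eq i h]

/-! ## The projective modules `P(i) = (ℂQ/I)·e_i` -/

/-- The indecomposable projective left `ℂQ/I`-module `P(i+1) = (ℂQ/I)·e_i` at the vertex `i`
(`0`-based), realized as the left ideal `{x | x·e_i = x}`. -/
def Pmod {μ : ℕ} (i : Fin μ) : Submodule (PathAlg μ) (PathAlg μ) where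
  carrier := {x | x * eE i = x}
  add_mem' := by
    intro x y hx hy
    simp only [Set.mem_setOf_eq, add_mul] at *
    rw [hx, hy]
  zero_mem' := by simp
  smul_mem' := by
    intro a x hx
    simp only [Set.mem_setOf_eq, smul_eq_mul, mul_assoc] at *
    rw [hx]

/-- Right multiplication by `γ` (a path ending at the vertex `j`, i.e. `γ·e_j = γ`) as a
morphism `P i ⟶ P j` of left modules.  Morphisms `P(i) → P(j)` given by paths from `j` to `i`
are exactly of this form. -/
def rmulP {μ : ℕ} {i j : Fin μ} (γ : PathAlg μ) (hγ : γ * eE j = γ) :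
    ↥(Pmod i) →ₗ[PathAlg μ] ↥(Pmod j) where
  toFun x := ⟨x.1 * γ, by
    show x.1 * γ * eE j = x.1 * γ
    rw [mul_assoc, hγ]⟩
  map_add' x y := Subtype.ext (add_mul _ _ _)
  map_smul' a x := Subtype.ext (mul_assoc _ _ _)

instance {μ : ℕ} (j : Fin μ) : SMulCommClass (PathAlg μ) ℂ ↥(Pmod j) :=
  ⟨fun a c x => Subtype.ext (by
    show a • c • x.1 = c • a • x.1
    exact (smul_comm c a x.1).symm)⟩

/-! ## The modules `S₊` and `S₋` -/

/-- Projection onto the `i`-th coordinate, as an endomorphism of `ℂ^μ`. -/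
noncomputable def vproj (μ : ℕ) (i : Fin μ) : Module.End ℂ (Fin μ → ℂ) :=
  (LinearMap.single ℂ (fun _ : Fin μ => ℂ) i).comp (LinearMap.proj i)

/-- The "arrow" endomorphism of `ℂ^μ` sending the `i`-th coordinate to the `(i+1)`-st. -/
noncomputable def varrow (μ : ℕ) (i : ℕ) : Module.End ℂ (Fin μ → ℂ) :=
  if h : i + 1 < μ then
    (LinearMap.single ℂ (fun _ : Fin μ => ℂ) ⟨i + 1, h⟩).comp (LinearMap.proj ⟨i, by omega⟩)
  else 0

/-- Generator action for `S₊`: `ℂ` at every vertex, each `α` acts as the identity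
(each `e i` acts as the projection, each `α_i` as the shift `i → i+1`), each `β` as zero. -/
noncomputable def SplusGen (μ : ℕ) : Gen μ → Module.End ℂ (Fin μ → ℂ)
  | .e i => vproj μ i
  | .a i => varrow μ i
  | .b _ => 0

/-- Generator action for `S₋`: each `α` acts as zero, each `β` as the identity. -/
noncomputable def SminusGen (μ : ℕ) : Gen μ → Module.End ℂ (Fin μ → ℂ)
  | .e i => vproj μ i
  | .a _ => 0
  | .b i => varrow μ i

theorem vproj_comp_varrow (μ : ℕ) (i : ℕ) (h : i + 1 < μ) :
    vproj μ ⟨i + 1, h⟩ * varrow μ i * vproj μ ⟨i, by omega⟩ = varrow μ i := by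
  ext v j
  simp only [varrow, dif_pos h, vproj, Module.End.mul_apply, LinearMap.comp_apply,
    LinearMap.single_apply, LinearMap.proj_apply, Pi.single_eq_same]

theorem splusGen_rel {μ : ℕ} : ∀ ⦃x y : FreeAlgebra ℂ (Gen μ)⦄, Rel μ x y →
    (FreeAlgebra.lift ℂ (SplusGen μ)) x = (FreeAlgebra.lift ℂ (SplusGen μ)) y := by
  intro x y h
  induction h with
  | idem i =>
      simp only [map_mul, FreeAlgebra.lift_ι_apply, SplusGen]
      ext v j
      simp [vproj, Module.End.mul_apply, LinearMap.single_apply, Pi.single_apply]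
  | orth i j hij =>
      simp only [map_mul, FreeAlgebra.lift_ι_apply, SplusGen, map_zero]
      ext v k
      simp [vproj, Module.End.mul_apply, LinearMap.single_apply, Pi.single_apply,
        hij, Ne.symm hij]
  | unit =>
      simp only [map_sum, map_one, FreeAlgebra.lift_ι_apply, SplusGen]
      ext v j
      simp [vproj, LinearMap.single_apply, Pi.single_apply, Finset.sum_apply]
  | aSupp i h =>
      simp only [map_mul, FreeAlgebra.lift_ι_apply, SplusGen]
      exact (vproj_comp_varrow μ i h).symm
  | aJunk i h =>
      simp only [FreeAlgebra.lift_ι_apply, SplusGen, map_zero, varrow, dif_neg h]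
  | bSupp i h =>
      simp only [map_mul, FreeAlgebra.lift_ι_apply, SplusGen, mul_zero, zero_mul]
  | bJunk i h => simp only [FreeAlgebra.lift_ι_apply, SplusGen, map_zero]
  | ab i =>
      simp only [map_mul, FreeAlgebra.lift_ι_apply, SplusGen, mul_zero, map_zero]
  | ba i =>
      simp only [map_mul, FreeAlgebra.lift_ι_apply, SplusGen, zero_mul, map_zero]

theorem sminusGen_rel {μ : ℕ} : ∀ ⦃x y : FreeAlgebra ℂ (Gen μ)⦄, Rel μ x y →
    (FreeAlgebra.lift ℂ (SminusGen μ)) x = (FreeAlgebra.lift ℂ (SminusGen μ)) y := by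
  intro x y h
  induction h with
  | idem i =>
      simp only [map_mul, FreeAlgebra.lift_ι_apply, SminusGen]
      ext v j
      simp [vproj, Module.End.mul_apply, LinearMap.single_apply, Pi.single_apply]
  | orth i j hij =>
      simp only [map_mul, FreeAlgebra.lift_ι_apply, SminusGen, map_zero]
      ext v k
      simp [vproj, Module.End.mul_apply, LinearMap.single_apply, Pi.single_apply,
        hij, Ne.symm hij]
  | unit =>
      simp only [map_sum, map_one, FreeAlgebra.lift_ι_apply, SminusGen]
      ext v j
      simp [vproj, LinearMap.single_apply, Pi.single_apply, Finset.sum_apply]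
  | bSupp i h =>
      simp only [map_mul, FreeAlgebra.lift_ι_apply, SminusGen]
      exact (vproj_comp_varrow μ i h).symm
  | bJunk i h =>
      simp only [FreeAlgebra.lift_ι_apply, SminusGen, map_zero, varrow, dif_neg h]
  | aSupp i h =>
      simp only [map_mul, FreeAlgebra.lift_ι_apply, SminusGen, mul_zero, zero_mul]
  | aJunk i h => simp only [FreeAlgebra.lift_ι_apply, SminusGen, map_zero]
  | ba i =>
      simp only [map_mul, FreeAlgebra.lift_ι_apply, SminusGen, mul_zero, map_zero]
  | ab i =>
      simp only [map_mul, FreeAlgebra.lift_ι_apply, SminusGen, zero_mul, map_zero]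

/-- The action of `ℂQ/I` on `S₊`. -/
noncomputable def SplusRho (μ : ℕ) : PathAlg μ →ₐ[ℂ] Module.End ℂ (Fin μ → ℂ) :=
  RingQuot.liftAlgHom ℂ ⟨FreeAlgebra.lift ℂ (SplusGen μ), splusGen_rel⟩

/-- The action of `ℂQ/I` on `S₋`. -/
noncomputable def SminusRho (μ : ℕ) : PathAlg μ →ₐ[ℂ] Module.End ℂ (Fin μ → ℂ) :=
  RingQuot.liftAlgHom ℂ ⟨FreeAlgebra.lift ℂ (SminusGen μ), sminusGen_rel⟩

/-- `S₊`: the `ℂQ/I`-module with `ℂ` at every vertex, every `α_i` acting as the identity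
and every `β_i` acting as zero. -/
def Splus (μ : ℕ) : Type := Fin μ → ℂ

instance (μ : ℕ) : AddCommGroup (Splus μ) := inferInstanceAs (AddCommGroup (Fin μ → ℂ))

noncomputable instance (μ : ℕ) : Module (PathAlg μ) (Splus μ) where
  smul a v := SplusRho μ a v
  one_smul v := by show SplusRho μ 1 _ = _; rw [map_one]; rfl
  mul_smul a b v := by show SplusRho μ (a * b) _ = _; rw [map_mul]; rfl
  smul_add a v w := (SplusRho μ a).map_add v w
  smul_zero a := (SplusRho μ a).map_zero
  add_smul a b v := by show SplusRho μ (a + b) _ = _; rw [map_add]; rfl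
  zero_smul v := by show SplusRho μ 0 _ = _; rw [map_zero]; rfl

/-- `S₋`: the `ℂQ/I`-module with `ℂ` at every vertex, every `α_i` acting as zero and every
`β_i` acting as the identity. -/
def Sminus (μ : ℕ) : Type := Fin μ → ℂ

instance (μ : ℕ) : AddCommGroup (Sminus μ) := inferInstanceAs (AddCommGroup (Fin μ → ℂ))

noncomputable instance (μ : ℕ) : Module (PathAlg μ) (Sminus μ) where
  smul a v := SminusRho μ a v
  one_smul v := by show SminusRho μ 1 _ = _; rw [map_one]; rfl
  mul_smul a b v := by show SminusRho μ (a * b) _ = _; rw [map_mul]; rfl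
  smul_add a v w := (SminusRho μ a).map_add v w
  smul_zero a := (SminusRho μ a).map_zero
  add_smul a b v := by show SminusRho μ (a + b) _ = _; rw [map_add]; rfl
  zero_smul v := by show SminusRho μ 0 _ = _; rw [map_zero]; rfl

/-! ## The injective modules `I(i) = D(e_i·(ℂQ/I))` -/

/-- The right ideal `e_i·(ℂQ/I)`, as a `ℂ`-subspace. -/
def Qmod {μ : ℕ} (i : Fin μ) : Submodule ℂ (PathAlg μ) where
  carrier := {x | eE i * x = x}
  add_mem' := by
    intro x y hx hy
    simp only [Set.mem_setOf_eq, mul_add] at *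
    rw [hx, hy]
  zero_mem' := by simp
  smul_mem' := by
    intro c x hx
    simp only [Set.mem_setOf_eq, mul_smul_comm] at *
    rw [hx]

/-- Right multiplication by `a ∈ ℂQ/I` on the right ideal `e_i·(ℂQ/I)`, `ℂ`-linearly. -/
def rmulQ {μ : ℕ} (i : Fin μ) (a : PathAlg μ) : ↥(Qmod i) →ₗ[ℂ] ↥(Qmod i) where
  toFun y := ⟨y.1 * a, by
    show eE i * (y.1 * a) = y.1 * a
    rw [← mul_assoc, y.2]⟩
  map_add' y z := Subtype.ext (add_mul _ _ _)
  map_smul' c y := Subtype.ext (smul_mul_assoc c y.1 a)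

/-- Left multiplication by a path `γ` with `e_i·γ = γ` , as a `ℂ`-linear map
`e_j·(ℂQ/I) → e_i·(ℂQ/I)`. -/
def lmulQ {μ : ℕ} {i j : Fin μ} (γ : PathAlg μ) (hγ : eE i * γ = γ) :
    ↥(Qmod j) →ₗ[ℂ] ↥(Qmod (μ := μ) i) where
  toFun y := ⟨γ * y.1, by
    show eE i * (γ * y.1) = γ * y.1
    rw [← mul_assoc, hγ]⟩
  map_add' y z := Subtype.ext (mul_add _ _ _)
  map_smul' c y := Subtype.ext (mul_smul_comm c γ y.1)

/-- The indecomposable injective `ℂQ/I`-module `I(i+1)` at the vertex `i` (`0`-based):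
the `ℂ`-linear dual of the right ideal `e_i·(ℂQ/I)`, with the left action
`(a·φ)(y) = φ(y·a)`. -/
abbrev Imod {μ : ℕ} (i : Fin μ) := Module.Dual ℂ ↥(Qmod i)

noncomputable instance {μ : ℕ} (i : Fin μ) : Module (PathAlg μ) (Imod i) where
  smul a φ := φ ∘ₗ rmulQ i a
  one_smul φ := by
    ext y
    show φ (rmulQ i 1 y) = φ y
    congr 1
    exact Subtype.ext (mul_one y.1)
  mul_smul a b φ := by
    ext y
    show φ (rmulQ i (a * b) y) = φ (rmulQ i b (rmulQ i a y))
    congr 1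
    exact Subtype.ext (mul_assoc y.1 a b).symm
  smul_zero a := rfl
  smul_add a φ ψ := rfl
  add_smul a b φ := by
    ext y
    show φ (rmulQ i (a + b) y) = φ (rmulQ i a y) + φ (rmulQ i b y)
    rw [← map_add]
    congr 1
    exact Subtype.ext (mul_add y.1 a b)
  zero_smul φ := by
    ext y
    show φ (rmulQ i 0 y) = 0
    rw [show rmulQ i 0 y = 0 from Subtype.ext (mul_zero y.1), map_zero]

/-- The morphism `I(i) ⟶ I(j)` of left modules dual to left multiplication
`e_j·(ℂQ/I) → e_i·(ℂQ/I)` by a path `γ` with `e_i·γ = γ` (for the arrows `γ = α, β` these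
are the maps `α̃, β̃` of the paper). -/
noncomputable def lmulDual {μ : ℕ} {i j : Fin μ} (γ : PathAlg μ) (hγ : eE i * γ = γ) :
    Imod (μ := μ) i →ₗ[PathAlg μ] Imod (μ := μ) j where
  toFun φ := φ ∘ₗ lmulQ γ hγ
  map_add' φ ψ := rfl
  map_smul' a φ := by
    ext y
    show φ (rmulQ i a (lmulQ γ hγ y)) = φ (lmulQ γ hγ (rmulQ j a y))
    congr 1
    exact Subtype.ext (mul_assoc γ y.1 a)

end CHS

namespace CHS

/-! ### Auxiliary: path basis of `PathAlg 4` -/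

theorem eE_orth {μ : ℕ} {i j : Fin μ} (h : i ≠ j) : eE (μ := μ) i * eE j = 0 := by
  simpa [eE, map_mul] using RingQuot.mkAlgHom_rel ℂ (Rel.orth i j h)

theorem aE_junk {μ : ℕ} {i : ℕ} (h : ¬ i + 1 < μ) : aE (μ := μ) i = 0 := by
  simpa [aE] using RingQuot.mkAlgHom_rel ℂ (Rel.aJunk i h)

theorem bE_junk {μ : ℕ} {i : ℕ} (h : ¬ i + 1 < μ) : bE (μ := μ) i = 0 := by
  simpa [bE] using RingQuot.mkAlgHom_rel ℂ (Rel.bJunk i h)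

theorem aE_bE {μ : ℕ} (i : ℕ) : aE (μ := μ) (i + 1) * bE i = 0 := by
  simpa [aE, bE, map_mul] using RingQuot.mkAlgHom_rel ℂ (Rel.ab i)

theorem bE_aE {μ : ℕ} (i : ℕ) : bE (μ := μ) (i + 1) * aE i = 0 := by
  simpa [aE, bE, map_mul] using RingQuot.mkAlgHom_rel ℂ (Rel.ba i)

theorem one_eq_sum_eE {μ : ℕ} : (1 : PathAlg μ) = ∑ i : Fin μ, eE i := by
  have := RingQuot.mkAlgHom_rel ℂ (Rel.unit (μ := μ))
  simpa [eE, map_sum] using this.symm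

/-- `eE` with a natural-number index, `0` out of range. -/
noncomputable def eE' (μ : ℕ) (i : ℕ) : PathAlg μ :=
  if h : i < μ then eE ⟨i, h⟩ else 0

theorem eE'_of_lt {μ i : ℕ} (h : i < μ) : eE' μ i = eE ⟨i, h⟩ := dif_pos h

theorem eE'_mul_eE' (μ : ℕ) (i j : ℕ) :
    eE' μ i * eE' μ j = if i = j then eE' μ i else 0 := by
  unfold eE'
  by_cases hi : i < μ <;> by_cases hj : j < μ
  · rw [dif_pos hi, dif_pos hj]
    by_cases hij : i = j
    · subst hij; simp [eE_idem]
    · rw [eE_orth (by simpa using hij), if_neg hij]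
  · rw [dif_neg hj, mul_zero, if_neg (by omega)]
  · rw [dif_neg hi, zero_mul, if_neg (by omega)]
  · rw [dif_neg hi, zero_mul]; simp

theorem aE_mul_eE' (μ : ℕ) (i : ℕ) : aE (μ := μ) i * eE' μ i = aE i := by
  by_cases h : i + 1 < μ
  · rw [eE'_of_lt (by omega)]; exact aE_mul_eE i h
  · rw [aE_junk h, zero_mul]

theorem eE'_mul_aE (μ : ℕ) (i : ℕ) : eE' μ (i + 1) * aE (μ := μ) i = aE i := by
  by_cases h : i + 1 < μ
  · rw [eE'_of_lt h]; exact eE_mul_aE i h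
  · rw [aE_junk h, mul_zero]

theorem bE_mul_eE' (μ : ℕ) (i : ℕ) : bE (μ := μ) i * eE' μ i = bE i := by
  by_cases h : i + 1 < μ
  · rw [eE'_of_lt (by omega)]; exact bE_mul_eE i h
  · rw [bE_junk h, zero_mul]

theorem eE'_mul_bE (μ : ℕ) (i : ℕ) : eE' μ (i + 1) * bE (μ := μ) i = bE i := by
  by_cases h : i + 1 < μ
  · rw [eE'_of_lt h]; exact eE_mul_bE i h
  · rw [bE_junk h, mul_zero]

theorem eE'_mul_aE_ite (μ j i : ℕ) :
    eE' μ j * aE (μ := μ) i = if j = i + 1 then aE i else 0 := by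
  by_cases h : j = i + 1
  · rw [if_pos h, h, eE'_mul_aE]
  · rw [if_neg h, ← eE'_mul_aE μ i, ← mul_assoc, eE'_mul_eE', if_neg h, zero_mul]

theorem eE'_mul_bE_ite (μ j i : ℕ) :
    eE' μ j * bE (μ := μ) i = if j = i + 1 then bE i else 0 := by
  by_cases h : j = i + 1
  · rw [if_pos h, h, eE'_mul_bE]
  · rw [if_neg h, ← eE'_mul_bE μ i, ← mul_assoc, eE'_mul_eE', if_neg h, zero_mul]

theorem aE_mul_bE (μ : ℕ) (i j : ℕ) : aE (μ := μ) i * bE j = 0 := by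
  by_cases hij : i = j + 1
  · subst hij; exact aE_bE j
  · rw [← aE_mul_eE' μ i, ← eE'_mul_bE μ j, mul_assoc (aE i), ← mul_assoc (eE' μ i),
      eE'_mul_eE', if_neg hij, zero_mul, mul_zero]

theorem bE_mul_aE (μ : ℕ) (i j : ℕ) : bE (μ := μ) i * aE j = 0 := by
  by_cases hij : i = j + 1
  · subst hij; exact bE_aE j
  · rw [← bE_mul_eE' μ i, ← eE'_mul_aE μ j, mul_assoc (bE i), ← mul_assoc (eE' μ i),
      eE'_mul_eE', if_neg hij, zero_mul, mul_zero]

/-- The path `α_{i+k}⋯α_{i+1} : i → i+k` (0 out of range). -/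
noncomputable def pA (μ : ℕ) : ℕ → ℕ → PathAlg μ
  | i, 0 => eE' μ i
  | i, k + 1 => aE (i + k) * pA μ i k

/-- The path `β_{i+k}⋯β_{i+1} : i → i+k` (0 out of range). -/
noncomputable def pB (μ : ℕ) : ℕ → ℕ → PathAlg μ
  | i, 0 => eE' μ i
  | i, k + 1 => bE (i + k) * pB μ i k

@[simp] theorem pA_zero (μ i : ℕ) : pA μ i 0 = eE' μ i := rfl

@[simp] theorem pB_zero (μ i : ℕ) : pB μ i 0 = eE' μ i := rfl

theorem pA_succ (μ i k : ℕ) : pA μ i (k + 1) = aE (i + k) * pA μ i k := rfl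

theorem pB_succ (μ i k : ℕ) : pB μ i (k + 1) = bE (i + k) * pB μ i k := rfl

theorem pA_one (μ i : ℕ) : pA μ i 1 = aE i := by
  rw [pA_succ, pA_zero, Nat.add_zero, aE_mul_eE']

theorem pB_one (μ i : ℕ) : pB μ i 1 = bE i := by
  rw [pB_succ, pB_zero, Nat.add_zero, bE_mul_eE']

theorem pA_mul_eE' (μ i k j : ℕ) :
    pA μ i k * eE' μ j = if j = i then pA μ i k else 0 := by
  induction k with
  | zero =>
      rw [pA_zero, eE'_mul_eE']
      by_cases h : i = j
      · subst h; simp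
      · rw [if_neg h, if_neg (Ne.symm h)]
  | succ k ih =>
      rw [pA_succ, mul_assoc, ih]
      by_cases h : j = i <;> simp [h, pA_succ]

theorem pB_mul_eE' (μ i k j : ℕ) :
    pB μ i k * eE' μ j = if j = i then pB μ i k else 0 := by
  induction k with
  | zero =>
      rw [pB_zero, eE'_mul_eE']
      by_cases h : i = j
      · subst h; simp
      · rw [if_neg h, if_neg (Ne.symm h)]
  | succ k ih =>
      rw [pB_succ, mul_assoc, ih]
      by_cases h : j = i <;> simp [h, pB_succ]

theorem eE'_mul_pA (μ i k j : ℕ) :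
    eE' μ j * pA μ i k = if j = i + k then pA μ i k else 0 := by
  induction k with
  | zero =>
      rw [pA_zero, eE'_mul_eE', Nat.add_zero]
      by_cases h : j = i
      · subst h; simp
      · simp [h]
  | succ k ih =>
      rw [pA_succ, ← mul_assoc, eE'_mul_aE_ite]
      by_cases h : j = i + k + 1
      · rw [if_pos h, if_pos (show j = i + (k + 1) by omega)]
      · rw [if_neg h, if_neg (show ¬ j = i + (k + 1) by omega), zero_mul]

theorem eE'_mul_pB (μ i k j : ℕ) :
    eE' μ j * pB μ i k = if j = i + k then pB μ i k else 0 := by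
  induction k with
  | zero =>
      rw [pB_zero, eE'_mul_eE', Nat.add_zero]
      by_cases h : j = i
      · subst h; simp
      · simp [h]
  | succ k ih =>
      rw [pB_succ, ← mul_assoc, eE'_mul_bE_ite]
      by_cases h : j = i + k + 1
      · rw [if_pos h, if_pos (show j = i + (k + 1) by omega)]
      · rw [if_neg h, if_neg (show ¬ j = i + (k + 1) by omega), zero_mul]

theorem pA_snoc (μ i k : ℕ) : pA μ i (k + 1) = pA μ (i + 1) k * aE i := by
  induction k with
  | zero =>
      rw [pA_succ, pA_zero, pA_zero, Nat.add_zero, aE_mul_eE', eE'_mul_aE]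
  | succ k ih =>
      rw [pA_succ μ i (k + 1), ih, pA_succ μ (i + 1) k, ← mul_assoc,
        show i + (k + 1) = i + 1 + k by omega]

theorem pB_snoc (μ i k : ℕ) : pB μ i (k + 1) = pB μ (i + 1) k * bE i := by
  induction k with
  | zero =>
      rw [pB_succ, pB_zero, pB_zero, Nat.add_zero, bE_mul_eE', eE'_mul_bE]
  | succ k ih =>
      rw [pB_succ μ i (k + 1), ih, pB_succ μ (i + 1) k, ← mul_assoc,
        show i + (k + 1) = i + 1 + k by omega]

theorem pA_mul_pA (μ i k j l : ℕ) :
    pA μ i k * pA μ j l = if i = j + l then pA μ j (k + l) else 0 := by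
  by_cases h : i = j + l
  · rw [if_pos h]
    subst h
    induction k with
    | zero => rw [pA_zero, eE'_mul_pA, if_pos rfl, Nat.zero_add]
    | succ k ih =>
        rw [pA_succ, mul_assoc, ih, show k + 1 + l = (k + l) + 1 by omega, pA_succ,
          show j + l + k = j + (k + l) by omega]
  · have hs : pA μ i k * eE' μ i = pA μ i k := by rw [pA_mul_eE', if_pos rfl]
    rw [if_neg h]
    conv_lhs => rw [← hs]
    rw [mul_assoc, eE'_mul_pA, if_neg h, mul_zero]

theorem pB_mul_pB (μ i k j l : ℕ) :
    pB μ i k * pB μ j l = if i = j + l then pB μ j (k + l) else 0 := by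
  by_cases h : i = j + l
  · rw [if_pos h]
    subst h
    induction k with
    | zero => rw [pB_zero, eE'_mul_pB, if_pos rfl, Nat.zero_add]
    | succ k ih =>
        rw [pB_succ, mul_assoc, ih, show k + 1 + l = (k + l) + 1 by omega, pB_succ,
          show j + l + k = j + (k + l) by omega]
  · have hs : pB μ i k * eE' μ i = pB μ i k := by rw [pB_mul_eE', if_pos rfl]
    rw [if_neg h]
    conv_lhs => rw [← hs]
    rw [mul_assoc, eE'_mul_pB, if_neg h, mul_zero]

theorem pA_mul_pB (μ i k j l : ℕ) (hk : 1 ≤ k) (hl : 1 ≤ l) :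
    pA μ i k * pB μ j l = 0 := by
  obtain ⟨k, rfl⟩ : ∃ k', k = k' + 1 := ⟨k - 1, by omega⟩
  obtain ⟨l, rfl⟩ : ∃ l', l = l' + 1 := ⟨l - 1, by omega⟩
  rw [pA_snoc, pB_succ, mul_assoc, ← mul_assoc (aE i), aE_mul_bE, zero_mul, mul_zero]

theorem pB_mul_pA (μ i k j l : ℕ) (hk : 1 ≤ k) (hl : 1 ≤ l) :
    pB μ i k * pA μ j l = 0 := by
  obtain ⟨k, rfl⟩ : ∃ k', k = k' + 1 := ⟨k - 1, by omega⟩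
  obtain ⟨l, rfl⟩ : ∃ l', l = l' + 1 := ⟨l - 1, by omega⟩
  rw [pB_snoc, pA_succ, mul_assoc, ← mul_assoc (bE i), bE_mul_aE, zero_mul, mul_zero]

/-- The set of path elements of `ℂQ/I`. -/
def pathSet (μ : ℕ) : Set (PathAlg μ) :=
  {x | ∃ i k, x = pA μ i k ∨ x = pB μ i k}

/-- The `ℂ`-span of the paths. -/
noncomputable def pathSpan (μ : ℕ) : Submodule ℂ (PathAlg μ) :=
  Submodule.span ℂ (pathSet μ)

theorem pA_mem_pathSpan (μ i k : ℕ) : pA μ i k ∈ pathSpan μ :=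
  Submodule.subset_span ⟨i, k, Or.inl rfl⟩

theorem pB_mem_pathSpan (μ i k : ℕ) : pB μ i k ∈ pathSpan μ :=
  Submodule.subset_span ⟨i, k, Or.inr rfl⟩

theorem path_mul_path_mem (μ : ℕ) {x y : PathAlg μ} (hx : x ∈ pathSet μ)
    (hy : y ∈ pathSet μ) : x * y ∈ pathSpan μ := by
  obtain ⟨i, k, hx | hx⟩ := hx <;> obtain ⟨j, l, hy | hy⟩ := hy <;> subst hx hy
  · rw [pA_mul_pA]
    split
    · exact pA_mem_pathSpan μ j (k + l)
    · exact zero_mem _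
  · rcases Nat.eq_zero_or_pos k with hk | hk
    · subst hk
      rw [pA_zero, eE'_mul_pB]
      split
      · exact pB_mem_pathSpan μ j l
      · exact zero_mem _
    rcases Nat.eq_zero_or_pos l with hl | hl
    · subst hl
      rw [pB_zero, pA_mul_eE']
      split
      · exact pA_mem_pathSpan μ i k
      · exact zero_mem _
    rw [pA_mul_pB μ i k j l hk hl]
    exact zero_mem _
  · rcases Nat.eq_zero_or_pos k with hk | hk
    · subst hk
      rw [pB_zero, eE'_mul_pA]
      split
      · exact pA_mem_pathSpan μ j l
      · exact zero_mem _
    rcases Nat.eq_zero_or_pos l with hl | hl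
    · subst hl
      rw [pA_zero, pB_mul_eE']
      split
      · exact pB_mem_pathSpan μ i k
      · exact zero_mem _
    rw [pB_mul_pA μ i k j l hk hl]
    exact zero_mem _
  · rw [pB_mul_pB]
    split
    · exact pB_mem_pathSpan μ j (k + l)
    · exact zero_mem _

theorem mul_mem_pathSpan (μ : ℕ) {x y : PathAlg μ} (hx : x ∈ pathSpan μ)
    (hy : y ∈ pathSpan μ) : x * y ∈ pathSpan μ := by
  induction hx using Submodule.span_induction with
  | mem x hx =>
      induction hy using Submodule.span_induction with
      | mem y hy => exact path_mul_path_mem μ hx hy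
      | zero => rw [mul_zero]; exact zero_mem _
      | add y z _ _ h1 h2 => rw [mul_add]; exact add_mem h1 h2
      | smul c y _ h => rw [mul_smul_comm]; exact Submodule.smul_mem _ _ h
  | zero => rw [zero_mul]; exact zero_mem _
  | add x z _ _ h1 h2 => rw [add_mul]; exact add_mem h1 h2
  | smul c x _ h => rw [smul_mul_assoc]; exact Submodule.smul_mem _ _ h

theorem one_mem_pathSpan (μ : ℕ) : (1 : PathAlg μ) ∈ pathSpan μ := by
  rw [one_eq_sum_eE]
  refine Submodule.sum_mem _ fun j _ => ?_
  have : eE j = pA μ (j : ℕ) 0 := by rw [pA_zero, eE'_of_lt j.2]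
  rw [this]
  exact pA_mem_pathSpan μ _ 0

theorem mem_pathSpan (μ : ℕ) (z : PathAlg μ) : z ∈ pathSpan μ := by
  obtain ⟨w, rfl⟩ := RingQuot.mkAlgHom_surjective ℂ (Rel μ) z
  induction w using FreeAlgebra.induction with
  | grade0 r =>
      rw [AlgHom.commutes]
      rw [Algebra.algebraMap_eq_smul_one]
      exact Submodule.smul_mem _ _ (one_mem_pathSpan μ)
  | grade1 g =>
      cases g with
      | e j =>
          have : RingQuot.mkAlgHom ℂ (Rel μ) (FreeAlgebra.ι ℂ (Gen.e j)) = pA μ (j : ℕ) 0 := by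
            rw [pA_zero, eE'_of_lt j.2]; rfl
          rw [this]; exact pA_mem_pathSpan μ _ 0
      | a j =>
          have : RingQuot.mkAlgHom ℂ (Rel μ) (FreeAlgebra.ι ℂ (Gen.a j)) = pA μ j 1 := by
            rw [pA_one]; rfl
          rw [this]; exact pA_mem_pathSpan μ j 1
      | b j =>
          have : RingQuot.mkAlgHom ℂ (Rel μ) (FreeAlgebra.ι ℂ (Gen.b j)) = pB μ j 1 := by
            rw [pB_one]; rfl
          rw [this]; exact pB_mem_pathSpan μ j 1
  | mul x y hx hy => rw [map_mul]; exact mul_mem_pathSpan μ hx hy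
  | add x y hx hy => rw [map_add]; exact add_mem hx hy

/-! ### Evaluating `S₊`, `S₋` on paths -/

theorem rhoP_eE {μ : ℕ} (i : Fin μ) : SplusRho μ (eE i) = vproj μ i := by
  simp [SplusRho, eE, RingQuot.liftAlgHom_mkAlgHom_apply, FreeAlgebra.lift_ι_apply, SplusGen]

theorem rhoP_aE {μ : ℕ} (i : ℕ) : SplusRho μ (aE i) = varrow μ i := by
  simp [SplusRho, aE, RingQuot.liftAlgHom_mkAlgHom_apply, FreeAlgebra.lift_ι_apply, SplusGen]

theorem rhoP_bE {μ : ℕ} (i : ℕ) : SplusRho μ (bE i) = 0 := by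
  simp [SplusRho, bE, RingQuot.liftAlgHom_mkAlgHom_apply, FreeAlgebra.lift_ι_apply, SplusGen]

theorem rhoM_eE {μ : ℕ} (i : Fin μ) : SminusRho μ (eE i) = vproj μ i := by
  simp [SminusRho, eE, RingQuot.liftAlgHom_mkAlgHom_apply, FreeAlgebra.lift_ι_apply, SminusGen]

theorem rhoM_bE {μ : ℕ} (i : ℕ) : SminusRho μ (bE i) = varrow μ i := by
  simp [SminusRho, bE, RingQuot.liftAlgHom_mkAlgHom_apply, FreeAlgebra.lift_ι_apply, SminusGen]

theorem rhoM_aE {μ : ℕ} (i : ℕ) : SminusRho μ (aE i) = 0 := by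
  simp [SminusRho, aE, RingQuot.liftAlgHom_mkAlgHom_apply, FreeAlgebra.lift_ι_apply, SminusGen]

theorem vproj_apply {μ : ℕ} (i : Fin μ) (v : Fin μ → ℂ) :
    vproj μ i v = Pi.single i (v i) := rfl

theorem varrow_apply {μ : ℕ} (i : ℕ) (h : i + 1 < μ) (v : Fin μ → ℂ) :
    varrow μ i v = Pi.single ⟨i + 1, h⟩ (v ⟨i, by omega⟩) := by
  rw [varrow, dif_pos h]; rfl

theorem rhoP_pA {μ : ℕ} (j k : ℕ) (h : j + k < μ) (v : Fin μ → ℂ) :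
    SplusRho μ (pA μ j k) v = Pi.single ⟨j + k, h⟩ (v ⟨j, by omega⟩) := by
  induction k with
  | zero =>
      rw [pA_zero, eE'_of_lt (show j < μ by omega), rhoP_eE, vproj_apply]
      rfl
  | succ k ih =>
      rw [pA_succ, map_mul, Module.End.mul_apply, ih (by omega), rhoP_aE,
        varrow_apply (j + k) (show j + k + 1 < μ by omega), Pi.single_eq_same]
      rfl

theorem rhoM_pB {μ : ℕ} (j k : ℕ) (h : j + k < μ) (v : Fin μ → ℂ) :
    SminusRho μ (pB μ j k) v = Pi.single ⟨j + k, h⟩ (v ⟨j, by omega⟩) := by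
  induction k with
  | zero =>
      rw [pB_zero, eE'_of_lt (show j < μ by omega), rhoM_eE, vproj_apply]
      rfl
  | succ k ih =>
      rw [pB_succ, map_mul, Module.End.mul_apply, ih (by omega), rhoM_bE,
        varrow_apply (j + k) (show j + k + 1 < μ by omega), Pi.single_eq_same]
      rfl

theorem rhoP_pB {μ : ℕ} (j k : ℕ) (hk : 1 ≤ k) : SplusRho μ (pB μ j k) = 0 := by
  obtain ⟨l, rfl⟩ : ∃ l, k = l + 1 := ⟨k - 1, by omega⟩
  rw [pB_succ, map_mul, rhoP_bE, zero_mul]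

theorem rhoM_pA {μ : ℕ} (j k : ℕ) (hk : 1 ≤ k) : SminusRho μ (pA μ j k) = 0 := by
  obtain ⟨l, rfl⟩ : ∃ l, k = l + 1 := ⟨k - 1, by omega⟩
  rw [pA_succ, map_mul, rhoM_aE, zero_mul]

theorem splus_smul_def {μ : ℕ} (x : PathAlg μ) (v : Splus μ) :
    x • v = SplusRho μ x v := rfl

theorem sminus_smul_def {μ : ℕ} (x : PathAlg μ) (v : Sminus μ) :
    x • v = SminusRho μ x v := rfl

theorem imod_smul_def {μ : ℕ} (i : Fin μ) (a : PathAlg μ) (φ : Imod i) (y : ↥(Qmod i)) :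
    (a • φ) y = φ (rmulQ i a y) := rfl

/-! ### The maps of Statement 9 -/

theorem eE_eq_eE' {μ : ℕ} (i : Fin μ) : eE i = eE' μ (i : ℕ) := by
  rw [eE'_of_lt i.2]

theorem pA_mem_Pmod (i : Fin 4) (k : ℕ) : pA 4 (i : ℕ) k ∈ Pmod i := by
  show pA 4 (i : ℕ) k * eE i = pA 4 (i : ℕ) k
  rw [eE_eq_eE', pA_mul_eE', if_pos rfl]

theorem pB_mem_Pmod (i : Fin 4) (k : ℕ) : pB 4 (i : ℕ) k ∈ Pmod i := by
  show pB 4 (i : ℕ) k * eE i = pB 4 (i : ℕ) k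
  rw [eE_eq_eE', pB_mul_eE', if_pos rfl]

theorem pA_mem_Qmod (i : Fin 4) (j k : ℕ) (h : j + k = (i : ℕ)) : pA 4 j k ∈ Qmod i := by
  show eE i * pA 4 j k = pA 4 j k
  rw [eE_eq_eE', eE'_mul_pA, if_pos h.symm]

theorem pB_mem_Qmod (i : Fin 4) (j k : ℕ) (h : j + k = (i : ℕ)) : pB 4 j k ∈ Qmod i := by
  show eE i * pB 4 j k = pB 4 j k
  rw [eE_eq_eE', eE'_mul_pB, if_pos h.symm]

/-- The paths starting at the vertex `i`. -/
def TP (i : Fin 4) : Set (PathAlg 4) :=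
  {z | ∃ k, z = pA 4 (i : ℕ) k ∨ z = pB 4 (i : ℕ) k}

/-- The paths ending at the vertex `i`. -/
def TQ (i : Fin 4) : Set (PathAlg 4) :=
  {z | ∃ j k, j + k = (i : ℕ) ∧ (z = pA 4 j k ∨ z = pB 4 j k)}

theorem Pmod_subset_span (i : Fin 4) {x : PathAlg 4} (hx : x ∈ Pmod i) :
    x ∈ Submodule.span ℂ (TP i) := by
  have hx' : x * eE i = x := hx
  have hmap : Submodule.map (LinearMap.mulRight ℂ (eE i)) (pathSpan 4) ≤
      Submodule.span ℂ (TP i) := by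
    rw [pathSpan, Submodule.map_span]
    refine Submodule.span_le.2 ?_
    rintro z ⟨p, hp, rfl⟩
    obtain ⟨j, k, hp | hp⟩ := hp <;> subst hp
    · show pA 4 j k * eE i ∈ _
      rw [eE_eq_eE', pA_mul_eE']
      by_cases h : (i : ℕ) = j
      · subst h
        rw [if_pos rfl]
        exact Submodule.subset_span ⟨k, Or.inl rfl⟩
      · rw [if_neg h]; exact zero_mem _
    · show pB 4 j k * eE i ∈ _
      rw [eE_eq_eE', pB_mul_eE']
      by_cases h : (i : ℕ) = j
      · subst h
        rw [if_pos rfl]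
        exact Submodule.subset_span ⟨k, Or.inr rfl⟩
      · rw [if_neg h]; exact zero_mem _
  exact hmap ⟨x, mem_pathSpan 4 x, hx'⟩

theorem Qmod_subset_span (i : Fin 4) {x : PathAlg 4} (hx : x ∈ Qmod i) :
    x ∈ Submodule.span ℂ (TQ i) := by
  have hx' : eE i * x = x := hx
  have hmap : Submodule.map (LinearMap.mulLeft ℂ (eE i)) (pathSpan 4) ≤
      Submodule.span ℂ (TQ i) := by
    rw [pathSpan, Submodule.map_span]
    refine Submodule.span_le.2 ?_
    rintro z ⟨p, hp, rfl⟩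
    obtain ⟨j, k, hp | hp⟩ := hp <;> subst hp
    · show eE i * pA 4 j k ∈ _
      rw [eE_eq_eE', eE'_mul_pA]
      by_cases h : (i : ℕ) = j + k
      · rw [if_pos h]
        exact Submodule.subset_span ⟨j, k, h.symm, Or.inl rfl⟩
      · rw [if_neg h]; exact zero_mem _
    · show eE i * pB 4 j k ∈ _
      rw [eE_eq_eE', eE'_mul_pB]
      by_cases h : (i : ℕ) = j + k
      · rw [if_pos h]
        exact Submodule.subset_span ⟨j, k, h.symm, Or.inr rfl⟩
      · rw [if_neg h]; exact zero_mem _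
  exact hmap ⟨x, mem_pathSpan 4 x, hx'⟩

theorem span_TQ_le (i : Fin 4) : Submodule.span ℂ (TQ i) ≤ Qmod i := by
  refine Submodule.span_le.2 ?_
  rintro z ⟨j, k, hjk, hz | hz⟩ <;> subst hz
  · exact pA_mem_Qmod i j k hjk
  · exact pB_mem_Qmod i j k hjk

/-- The map `P(i) → S₊ ⊕ S₋`. -/
noncomputable def fmap (i : Fin 4) : ↥(Pmod i) →ₗ[PathAlg 4] (Splus 4 × Sminus 4) where
  toFun x := (x : PathAlg 4) • ((Pi.single i 1, Pi.single i 1) : Splus 4 × Sminus 4)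
  map_add' x y := by
    show ((x + y : ↥(Pmod i)) : PathAlg 4) • _ = _
    rw [Submodule.coe_add, add_smul]
  map_smul' a x := by
    show ((a • x : ↥(Pmod i)) : PathAlg 4) • _ = _
    rw [Submodule.coe_smul, smul_eq_mul, mul_smul]
    rfl

theorem fmap_apply (i : Fin 4) (x : ↥(Pmod i)) :
    fmap i x = (SplusRho 4 (x : PathAlg 4) (Pi.single i 1),
      SminusRho 4 (x : PathAlg 4) (Pi.single i 1)) := rfl

/-- The functional `S₊ ⊕ S₋ → I(i)` at the level of elements. -/
noncomputable def gfun (i : Fin 4) (m : Splus 4 × Sminus 4) : Imod i where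
  toFun y := SplusRho 4 (y : PathAlg 4) m.1 i - SminusRho 4 (y : PathAlg 4) m.2 i
  map_add' y z := by
    show SplusRho 4 ((y : PathAlg 4) + z) m.1 i - SminusRho 4 ((y : PathAlg 4) + z) m.2 i = _
    simp only [map_add, LinearMap.add_apply, Pi.add_apply]
    change (SplusRho 4 (y : PathAlg 4) m.1 i + SplusRho 4 (z : PathAlg 4) m.1 i)
      - (SminusRho 4 (y : PathAlg 4) m.2 i + SminusRho 4 (z : PathAlg 4) m.2 i) = _
    ring
  map_smul' c y := by
    show SplusRho 4 (c • (y : PathAlg 4)) m.1 i - SminusRho 4 (c • (y : PathAlg 4)) m.2 i = _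
    simp only [map_smul, LinearMap.smul_apply, Pi.smul_apply, RingHom.id_apply, smul_eq_mul]
    change c * SplusRho 4 (y : PathAlg 4) m.1 i - c * SminusRho 4 (y : PathAlg 4) m.2 i = _
    ring

theorem gfun_apply (i : Fin 4) (m : Splus 4 × Sminus 4) (y : ↥(Qmod i)) :
    gfun i m y = SplusRho 4 (y : PathAlg 4) m.1 i - SminusRho 4 (y : PathAlg 4) m.2 i := rfl

/-- The map `S₊ ⊕ S₋ → I(i)`. -/
noncomputable def gmap (i : Fin 4) : (Splus 4 × Sminus 4) →ₗ[PathAlg 4] Imod i where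
  toFun := gfun i
  map_add' m n := by
    refine LinearMap.ext fun y => ?_
    show SplusRho 4 (y : PathAlg 4) (m.1 + n.1) i - SminusRho 4 (y : PathAlg 4) (m.2 + n.2) i
      = gfun i m y + gfun i n y
    rw [gfun_apply, gfun_apply]
    have e1 : SplusRho 4 (y : PathAlg 4) (m.1 + n.1) i
        = SplusRho 4 (y : PathAlg 4) m.1 i + SplusRho 4 (y : PathAlg 4) n.1 i :=
      congrFun ((SplusRho 4 (y : PathAlg 4)).map_add m.1 n.1) i
    have e2 : SminusRho 4 (y : PathAlg 4) (m.2 + n.2) i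
        = SminusRho 4 (y : PathAlg 4) m.2 i + SminusRho 4 (y : PathAlg 4) n.2 i :=
      congrFun ((SminusRho 4 (y : PathAlg 4)).map_add m.2 n.2) i
    linear_combination e1 - e2
  map_smul' a m := by
    refine LinearMap.ext fun y => ?_
    show SplusRho 4 (y : PathAlg 4) (SplusRho 4 a m.1) i
        - SminusRho 4 (y : PathAlg 4) (SminusRho 4 a m.2) i
      = SplusRho 4 ((y : PathAlg 4) * a) m.1 i - SminusRho 4 ((y : PathAlg 4) * a) m.2 i
    rw [map_mul, map_mul]
    rfl

theorem pA_oob {μ : ℕ} (j k : ℕ) (h : ¬ j + k < μ) (hk : 1 ≤ k) : pA μ j k = 0 := by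
  obtain ⟨l, rfl⟩ : ∃ l, k = l + 1 := ⟨k - 1, by omega⟩
  rw [pA_succ, aE_junk (by omega), zero_mul]

theorem pB_oob {μ : ℕ} (j k : ℕ) (h : ¬ j + k < μ) (hk : 1 ≤ k) : pB μ j k = 0 := by
  obtain ⟨l, rfl⟩ : ∃ l, k = l + 1 := ⟨k - 1, by omega⟩
  rw [pB_succ, bE_junk (by omega), zero_mul]

theorem mk_coe {n : ℕ} (i : Fin n) (h : (i : ℕ) < n) : (⟨(i : ℕ), h⟩ : Fin n) = i :=
  Fin.ext rfl

/-- The basis vector at the vertex `i`. -/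
noncomputable def delta (i : Fin 4) : Fin 4 → ℂ := Pi.single i 1

theorem delta_at (i : Fin 4) (h : (i : ℕ) < 4) : delta i ⟨(i : ℕ), h⟩ = 1 := by
  rw [delta, mk_coe, Pi.single_eq_same]

/-- Reconstruction of an element of `P(i)` from its pair of vectors in `S₊ × S₋`. -/
noncomputable def recon (i : Fin 4) : ((Fin 4 → ℂ) × (Fin 4 → ℂ)) →ₗ[ℂ] PathAlg 4 :=
  (∑ j : Fin 4, ((LinearMap.proj j).comp
      (LinearMap.fst ℂ (Fin 4 → ℂ) (Fin 4 → ℂ))).smulRight (pA 4 (i : ℕ) ((j : ℕ) - (i : ℕ))))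
  + ∑ j : Fin 4, ((LinearMap.proj j).comp
      (LinearMap.snd ℂ (Fin 4 → ℂ) (Fin 4 → ℂ))).smulRight
      (if j = i then 0 else pB 4 (i : ℕ) ((j : ℕ) - (i : ℕ)))

theorem recon_apply (i : Fin 4) (v w : Fin 4 → ℂ) :
    recon i (v, w) = (∑ j : Fin 4, v j • pA 4 (i : ℕ) ((j : ℕ) - (i : ℕ)))
      + ∑ j : Fin 4, w j • (if j = i then 0 else pB 4 (i : ℕ) ((j : ℕ) - (i : ℕ))) := by
  simp [recon, LinearMap.sum_apply]

theorem recon_single_fst (i l : Fin 4) :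
    recon i (Pi.single l 1, 0) = pA 4 (i : ℕ) ((l : ℕ) - (i : ℕ)) := by
  rw [recon_apply]
  simp [Pi.single_apply, ite_smul]

theorem recon_single_snd (i l : Fin 4) :
    recon i (0, Pi.single l 1) =
      if l = i then 0 else pB 4 (i : ℕ) ((l : ℕ) - (i : ℕ)) := by
  rw [recon_apply]
  simp only [Pi.single_apply, ite_smul, one_smul, zero_smul, Pi.zero_apply,
    Finset.sum_const_zero, zero_add, smul_ite, smul_zero]
  by_cases h : l = i
  · subst h
    refine (Finset.sum_eq_zero fun x _ => ?_).trans (if_pos rfl).symm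
    by_cases h1 : x = l <;> simp [h1]
  · rw [if_neg h]
    have key : ∀ x : Fin 4,
        (if x = i then 0 else if x = l then pB 4 (i : ℕ) ((x : ℕ) - (i : ℕ)) else 0)
          = if x = l then pB 4 (i : ℕ) ((l : ℕ) - (i : ℕ)) else 0 := by
      intro x
      by_cases h1 : x = i
      · subst h1
        rw [if_pos rfl, if_neg (fun hh => h hh.symm)]
      · rw [if_neg h1]
        by_cases h2 : x = l
        · subst h2; rfl
        · rw [if_neg h2, if_neg h2]
    simp only [key, Finset.sum_ite_eq', Finset.mem_univ, if_true]

theorem recon_pair (i : Fin 4) (v w : Fin 4 → ℂ) :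
    recon i (v, w) = recon i (v, 0) + recon i (0, w) := by
  rw [← map_add]
  norm_num

theorem recon_rho (i : Fin 4) {z : PathAlg 4} (hz : z ∈ Submodule.span ℂ (TP i)) :
    recon i (SplusRho 4 z (delta i), SminusRho 4 z (delta i)) = z := by
  induction hz using Submodule.span_induction with
  | mem z hz =>
      obtain ⟨k, hz | hz⟩ := hz <;> subst hz
      · -- z = pA 4 i k
        cases k with
        | zero =>
            have h4 : (i : ℕ) + 0 < 4 := by omega
            have h1 : SplusRho 4 (pA 4 (i : ℕ) 0) (delta i) = Pi.single i 1 := by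
              rw [rhoP_pA (i : ℕ) 0 h4, delta_at]
              exact congrArg (fun t => Pi.single t (1 : ℂ)) (Fin.ext rfl)
            have h2 : SminusRho 4 (pA 4 (i : ℕ) 0) (delta i) = Pi.single i 1 := by
              rw [pA_zero, ← pB_zero, rhoM_pB (i : ℕ) 0 h4, delta_at]
              exact congrArg (fun t => Pi.single t (1 : ℂ)) (Fin.ext rfl)
            rw [h1, h2, recon_pair, recon_single_fst, recon_single_snd, if_pos rfl,
              add_zero, Nat.sub_self, pA_zero]
        | succ k =>
            by_cases h4 : (i : ℕ) + (k + 1) < 4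
            · have h1 : SplusRho 4 (pA 4 (i : ℕ) (k + 1)) (delta i)
                  = Pi.single (⟨(i : ℕ) + (k + 1), h4⟩ : Fin 4) 1 := by
                rw [rhoP_pA (i : ℕ) (k + 1) h4, delta_at]
              have h2 : SminusRho 4 (pA 4 (i : ℕ) (k + 1)) (delta i) = 0 := by
                rw [rhoM_pA (i : ℕ) (k + 1) (by omega)]; rfl
              rw [h1, h2, recon_single_fst]
              show pA 4 (i : ℕ) ((i : ℕ) + (k + 1) - (i : ℕ)) = _
              rw [Nat.add_sub_cancel_left]
            · rw [pA_oob (i : ℕ) (k + 1) h4 (by omega), map_zero, map_zero,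
                LinearMap.zero_apply]
              exact map_zero (recon i)
      · -- z = pB 4 i k
        cases k with
        | zero =>
            have h4 : (i : ℕ) + 0 < 4 := by omega
            have h1 : SplusRho 4 (pB 4 (i : ℕ) 0) (delta i) = Pi.single i 1 := by
              rw [pB_zero, ← pA_zero, rhoP_pA (i : ℕ) 0 h4, delta_at]
              exact congrArg (fun t => Pi.single t (1 : ℂ)) (Fin.ext rfl)
            have h2 : SminusRho 4 (pB 4 (i : ℕ) 0) (delta i) = Pi.single i 1 := by
              rw [rhoM_pB (i : ℕ) 0 h4, delta_at]
              exact congrArg (fun t => Pi.single t (1 : ℂ)) (Fin.ext rfl)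
            rw [h1, h2, recon_pair, recon_single_fst, recon_single_snd, if_pos rfl,
              add_zero, Nat.sub_self, pA_zero, pB_zero]
        | succ k =>
            by_cases h4 : (i : ℕ) + (k + 1) < 4
            · have h1 : SplusRho 4 (pB 4 (i : ℕ) (k + 1)) (delta i) = 0 := by
                rw [rhoP_pB (i : ℕ) (k + 1) (by omega)]; rfl
              have h2 : SminusRho 4 (pB 4 (i : ℕ) (k + 1)) (delta i)
                  = Pi.single (⟨(i : ℕ) + (k + 1), h4⟩ : Fin 4) 1 := by
                rw [rhoM_pB (i : ℕ) (k + 1) h4, delta_at]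
              rw [h1, h2, recon_single_snd,
                if_neg (by simp [Fin.ext_iff])]
              show pB 4 (i : ℕ) ((i : ℕ) + (k + 1) - (i : ℕ)) = _
              rw [Nat.add_sub_cancel_left]
            · rw [pB_oob (i : ℕ) (k + 1) h4 (by omega), map_zero, map_zero,
                LinearMap.zero_apply]
              exact map_zero (recon i)
  | zero =>
      rw [map_zero, map_zero, LinearMap.zero_apply]
      exact map_zero (recon i)
  | add x y hx hy ihx ihy =>
      rw [map_add, map_add, LinearMap.add_apply, LinearMap.add_apply,
        show ((SplusRho 4 x (delta i) + SplusRho 4 y (delta i),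
          SminusRho 4 x (delta i) + SminusRho 4 y (delta i)) :
            (Fin 4 → ℂ) × (Fin 4 → ℂ))
          = (SplusRho 4 x (delta i), SminusRho 4 x (delta i))
            + (SplusRho 4 y (delta i), SminusRho 4 y (delta i)) from rfl,
        map_add, ihx, ihy]
  | smul c x hx ihx =>
      rw [map_smul, map_smul, LinearMap.smul_apply, LinearMap.smul_apply,
        show ((c • SplusRho 4 x (delta i), c • SminusRho 4 x (delta i)) :
            (Fin 4 → ℂ) × (Fin 4 → ℂ))
          = c • (SplusRho 4 x (delta i), SminusRho 4 x (delta i)) from rfl,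
        map_smul, ihx]

theorem corner (i : Fin 4) (z : PathAlg 4) :
    ∃ c : ℂ, eE i * z * eE i = c • eE i := by
  have hz := mem_pathSpan 4 z
  induction hz using Submodule.span_induction with
  | mem p hp =>
      obtain ⟨j, k, hp | hp⟩ := hp <;> subst hp
      · rw [eE_eq_eE', eE'_mul_pA]
        by_cases h : (i : ℕ) = j + k
        · rw [if_pos h, pA_mul_eE']
          by_cases h2 : (i : ℕ) = j
          · have hk : k = 0 := by omega
            subst hk
            rw [if_pos h2, pA_zero, ← h2]
            exact ⟨1, (one_smul ℂ _).symm⟩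
          · rw [if_neg h2]
            exact ⟨0, by rw [zero_smul]⟩
        · rw [if_neg h, zero_mul]
          exact ⟨0, by rw [zero_smul]⟩
      · rw [eE_eq_eE', eE'_mul_pB]
        by_cases h : (i : ℕ) = j + k
        · rw [if_pos h, pB_mul_eE']
          by_cases h2 : (i : ℕ) = j
          · have hk : k = 0 := by omega
            subst hk
            rw [if_pos h2, pB_zero, ← h2]
            exact ⟨1, (one_smul ℂ _).symm⟩
          · rw [if_neg h2]
            exact ⟨0, by rw [zero_smul]⟩
        · rw [if_neg h, zero_mul]
          exact ⟨0, by rw [zero_smul]⟩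
  | zero => exact ⟨0, by rw [mul_zero, zero_mul, zero_smul]⟩
  | add x y hx hy ihx ihy =>
      obtain ⟨c, hc⟩ := ihx
      obtain ⟨d, hd⟩ := ihy
      exact ⟨c + d, by rw [mul_add, add_mul, hc, hd, add_smul]⟩
  | smul a x hx ihx =>
      obtain ⟨c, hc⟩ := ihx
      exact ⟨a * c, by rw [mul_smul_comm, smul_mul_assoc, hc, mul_smul]⟩

theorem span_TP_mul_eE (i : Fin 4) {z : PathAlg 4}
    (hz : z ∈ Submodule.span ℂ (TP i)) : z * eE i = z := by
  induction hz using Submodule.span_induction with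
  | mem p hp =>
      obtain ⟨k, hp | hp⟩ := hp <;> subst hp
      · exact pA_mem_Pmod i k
      · exact pB_mem_Pmod i k
  | zero => rw [zero_mul]
  | add x y hx hy ihx ihy => rw [add_mul, ihx, ihy]
  | smul a x hx ihx => rw [smul_mul_assoc, ihx]

theorem rhoP_pA_at (i : Fin 4) (j k : ℕ) (h : j + k = (i : ℕ)) (v : Fin 4 → ℂ) :
    SplusRho 4 (pA 4 j k) v i = v ⟨j, by have := i.2; omega⟩ := by
  have h4 : j + k < 4 := by have := i.2; omega
  rw [rhoP_pA j k h4]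
  have he : (⟨j + k, h4⟩ : Fin 4) = i := Fin.ext h
  rw [he, Pi.single_eq_same]

theorem rhoM_pB_at (i : Fin 4) (j k : ℕ) (h : j + k = (i : ℕ)) (w : Fin 4 → ℂ) :
    SminusRho 4 (pB 4 j k) w i = w ⟨j, by have := i.2; omega⟩ := by
  have h4 : j + k < 4 := by have := i.2; omega
  rw [rhoM_pB j k h4]
  have he : (⟨j + k, h4⟩ : Fin 4) = i := Fin.ext h
  rw [he, Pi.single_eq_same]

theorem recon_mem_span (i : Fin 4) (v w : Fin 4 → ℂ) :
    recon i (v, w) ∈ Submodule.span ℂ (TP i) := by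
  rw [recon_apply]
  refine add_mem (Submodule.sum_mem _ fun j _ => Submodule.smul_mem _ _
      (Submodule.subset_span ⟨(j : ℕ) - (i : ℕ), Or.inl rfl⟩))
    (Submodule.sum_mem _ fun j _ => Submodule.smul_mem _ _ ?_)
  by_cases h : j = i
  · rw [if_pos h]; exact zero_mem _
  · rw [if_neg h]
    exact Submodule.subset_span ⟨(j : ℕ) - (i : ℕ), Or.inr rfl⟩

theorem rho_recon_fst (i : Fin 4) (v w : Fin 4 → ℂ)
    (hv0 : ∀ j : Fin 4, (j : ℕ) < (i : ℕ) → v j = 0)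
    (hw0 : ∀ j : Fin 4, (j : ℕ) < (i : ℕ) → w j = 0) :
    SplusRho 4 (recon i (v, w)) (delta i) = v := by
  funext l
  rw [recon_apply, map_add, map_sum, map_sum]
  simp only [map_smul, LinearMap.add_apply, LinearMap.sum_apply, LinearMap.smul_apply,
    Finset.sum_apply, Pi.add_apply, Pi.smul_apply, smul_eq_mul]
  rw [← Finset.sum_add_distrib]
  have key : ∀ j : Fin 4,
      v j * (SplusRho 4 (pA 4 (i : ℕ) ((j : ℕ) - (i : ℕ))) (delta i) l)
        + w j * (SplusRho 4 (if j = i then 0 else pB 4 (i : ℕ) ((j : ℕ) - (i : ℕ)))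
            (delta i) l)
      = v j * (if l = j then 1 else 0) := by
    intro j
    rcases lt_trichotomy ((j : ℕ)) ((i : ℕ)) with hj | hj | hj
    · simp [hv0 j hj, hw0 j hj]
    · have hji : j = i := Fin.ext hj
      subst hji
      rw [if_pos rfl, map_zero, LinearMap.zero_apply, Pi.zero_apply, mul_zero, add_zero,
        Nat.sub_self]
      congr 1
      have h4 : (j : ℕ) + 0 < 4 := by have := j.2; omega
      rw [rhoP_pA _ _ h4, delta_at,
        show (⟨(j : ℕ) + 0, h4⟩ : Fin 4) = j from Fin.ext (Nat.add_zero _), Pi.single_apply]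
    · have hne : ¬ j = i := by
        intro hc; subst hc; omega
      rw [if_neg hne, rhoP_pB _ _ (by omega), LinearMap.zero_apply, Pi.zero_apply,
        mul_zero, add_zero]
      congr 1
      have h4 : (i : ℕ) + ((j : ℕ) - (i : ℕ)) < 4 := by have := j.2; omega
      rw [rhoP_pA _ _ h4, delta_at,
        show (⟨(i : ℕ) + ((j : ℕ) - (i : ℕ)), h4⟩ : Fin 4) = j from
          Fin.ext (show (i : ℕ) + ((j : ℕ) - (i : ℕ)) = (j : ℕ) by omega),
        Pi.single_apply]
  rw [Finset.sum_congr rfl fun j _ => key j]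
  simp [mul_ite, Finset.sum_ite_eq]

theorem rho_recon_snd (i : Fin 4) (v w : Fin 4 → ℂ)
    (hv0 : ∀ j : Fin 4, (j : ℕ) < (i : ℕ) → v j = 0)
    (hw0 : ∀ j : Fin 4, (j : ℕ) < (i : ℕ) → w j = 0)
    (hvw : v i = w i) :
    SminusRho 4 (recon i (v, w)) (delta i) = w := by
  funext l
  rw [recon_apply, map_add, map_sum, map_sum]
  simp only [map_smul, LinearMap.add_apply, LinearMap.sum_apply, LinearMap.smul_apply,
    Finset.sum_apply, Pi.add_apply, Pi.smul_apply, smul_eq_mul]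
  rw [← Finset.sum_add_distrib]
  have key : ∀ j : Fin 4,
      v j * (SminusRho 4 (pA 4 (i : ℕ) ((j : ℕ) - (i : ℕ))) (delta i) l)
        + w j * (SminusRho 4 (if j = i then 0 else pB 4 (i : ℕ) ((j : ℕ) - (i : ℕ)))
            (delta i) l)
      = w j * (if l = j then 1 else 0) := by
    intro j
    rcases lt_trichotomy ((j : ℕ)) ((i : ℕ)) with hj | hj | hj
    · simp [hv0 j hj, hw0 j hj]
    · have hji : j = i := Fin.ext hj
      subst hji
      rw [if_pos rfl, map_zero, LinearMap.zero_apply, Pi.zero_apply, mul_zero, add_zero,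
        Nat.sub_self, pA_zero, ← pB_zero]
      have h4 : (j : ℕ) + 0 < 4 := by have := j.2; omega
      rw [rhoM_pB _ _ h4, delta_at,
        show (⟨(j : ℕ) + 0, h4⟩ : Fin 4) = j from Fin.ext (Nat.add_zero _), Pi.single_apply,
        hvw]
    · have hne : ¬ j = i := by
        intro hc; subst hc; omega
      rw [if_neg hne, rhoM_pA _ _ (by omega), LinearMap.zero_apply, Pi.zero_apply,
        mul_zero, zero_add]
      congr 1
      have h4 : (i : ℕ) + ((j : ℕ) - (i : ℕ)) < 4 := by have := j.2; omega
      rw [rhoM_pB _ _ h4, delta_at,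
        show (⟨(i : ℕ) + ((j : ℕ) - (i : ℕ)), h4⟩ : Fin 4) = j from
          Fin.ext (show (i : ℕ) + ((j : ℕ) - (i : ℕ)) = (j : ℕ) by omega),
        Pi.single_apply]
  rw [Finset.sum_congr rfl fun j _ => key j]
  simp [mul_ite, Finset.sum_ite_eq]

end CHS

namespace CHS

/-- Let `μ = 4` and let `S₊`, `S₋` be as above.  Then for each vertex `i`
there is a short exact sequence of `ℂQ/I`-modules `0 → P(i) → S₊ ⊕ S₋ → I(i) → 0`
(`0`-based vertex indices: `Pmod i` is `P(i+1)` and `Imod i` is `I(i+1)` of the paper). -/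
theorem statement9 (i : Fin 4) :
    ∃ (f : ↥(Pmod i) →ₗ[PathAlg 4] (Splus 4 × Sminus 4))
      (g : (Splus 4 × Sminus 4) →ₗ[PathAlg 4] Imod i),
      Function.Injective f ∧ Function.Exact f g ∧ Function.Surjective g := by
  classical
  have hker : ∀ u : ↥(Pmod i), fmap i u = 0 → u = 0 := by
    intro u hu
    have h1 : SplusRho 4 (u : PathAlg 4) (delta i) = 0 := congrArg Prod.fst hu
    have h2 : SminusRho 4 (u : PathAlg 4) (delta i) = 0 := congrArg Prod.snd hu
    have hr := recon_rho i (Pmod_subset_span i u.2)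
    rw [h1, h2] at hr
    refine Subtype.ext ?_
    rw [← hr]
    exact map_zero (recon i)
  refine ⟨fmap i, gmap i, ?_, ?_, ?_⟩
  · -- injectivity
    intro x y hxy
    have h := hker (x - y) (by rw [map_sub (fmap i) x y, hxy, sub_self])
    exact sub_eq_zero.mp h
  · -- exactness
    intro m
    constructor
    · intro hm
      have hEq : ∀ (z : PathAlg 4) (hz : z ∈ Qmod i),
          SplusRho 4 z m.1 i = SminusRho 4 z m.2 i := by
        intro z hz
        have h0 : gmap i m ⟨z, hz⟩ = 0 := by rw [hm]; rfl
        rw [show gmap i m ⟨z, hz⟩ = gfun i m ⟨z, hz⟩ from rfl, gfun_apply] at h0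
        exact sub_eq_zero.mp h0
      have hv0 : ∀ j : Fin 4, (j : ℕ) < (i : ℕ) → m.1 j = 0 := by
        intro j hj
        have h := hEq _ (pA_mem_Qmod i (j : ℕ) ((i : ℕ) - (j : ℕ)) (by omega))
        have e1 := rhoP_pA_at i (j : ℕ) ((i : ℕ) - (j : ℕ)) (by omega) m.1
        have e2 : SminusRho 4 (pA 4 (j : ℕ) ((i : ℕ) - (j : ℕ))) m.2 i = 0 :=
          congrFun (LinearMap.congr_fun (rhoM_pA _ _ (by omega)) m.2) i
        exact e1.symm.trans (h.trans e2)
      have hw0 : ∀ j : Fin 4, (j : ℕ) < (i : ℕ) → m.2 j = 0 := by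
        intro j hj
        have h := hEq _ (pB_mem_Qmod i (j : ℕ) ((i : ℕ) - (j : ℕ)) (by omega))
        have e1 := rhoM_pB_at i (j : ℕ) ((i : ℕ) - (j : ℕ)) (by omega) m.2
        have e2 : SplusRho 4 (pB 4 (j : ℕ) ((i : ℕ) - (j : ℕ))) m.1 i = 0 :=
          congrFun (LinearMap.congr_fun (rhoP_pB _ _ (by omega)) m.1) i
        exact e1.symm.trans (h.symm.trans e2)
      have hvw : m.1 i = m.2 i := by
        have h := hEq (eE i) (eE_idem i)
        have e1 : SplusRho 4 (eE i) m.1 i = m.1 i :=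
          (congrFun (LinearMap.congr_fun (rhoP_eE i) m.1) i).trans
            (Pi.single_eq_same (M := fun _ => ℂ) i _)
        have e2 : SminusRho 4 (eE i) m.2 i = m.2 i :=
          (congrFun (LinearMap.congr_fun (rhoM_eE i) m.2) i).trans
            (Pi.single_eq_same (M := fun _ => ℂ) i _)
        exact e1.symm.trans (h.trans e2)
      refine ⟨⟨recon i (m.1, m.2), span_TP_mul_eE i (recon_mem_span i m.1 m.2)⟩, ?_⟩
      exact Prod.ext (rho_recon_fst i m.1 m.2 hv0 hw0) (rho_recon_snd i m.1 m.2 hv0 hw0 hvw)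
    · rintro ⟨x, rfl⟩
      refine LinearMap.ext fun y => ?_
      show gfun i (fmap i x) y = (0 : Imod i) y
      rw [gfun_apply, LinearMap.zero_apply]
      have hc1 : ((fmap i x).1 : Fin 4 → ℂ) = SplusRho 4 (x : PathAlg 4) (delta i) := rfl
      have hc2 : ((fmap i x).2 : Fin 4 → ℂ) = SminusRho 4 (x : PathAlg 4) (delta i) := rfl
      rw [hc1, hc2, ← Module.End.mul_apply, ← map_mul, ← Module.End.mul_apply, ← map_mul]
      have hyx : eE i * ((y : PathAlg 4) * (x : PathAlg 4)) * eE i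
          = (y : PathAlg 4) * (x : PathAlg 4) := by
        rw [mul_assoc (eE i), mul_assoc (y : PathAlg 4),
          show (x : PathAlg 4) * eE i = x from x.2, ← mul_assoc,
          show eE i * (y : PathAlg 4) = y from y.2]
      obtain ⟨c, hc⟩ := corner i ((y : PathAlg 4) * (x : PathAlg 4))
      rw [← hyx, hc, map_smul, map_smul, rhoP_eE, rhoM_eE]
      simp [vproj_apply, delta, Pi.single_eq_same]
  · -- surjectivity
    intro φ
    refine ⟨(fun l => if h : (l : ℕ) ≤ (i : ℕ) then
        φ ⟨pA 4 (l : ℕ) ((i : ℕ) - (l : ℕ)), pA_mem_Qmod i _ _ (by omega)⟩ else 0,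
      fun l => if h : (l : ℕ) < (i : ℕ) then
        -φ ⟨pB 4 (l : ℕ) ((i : ℕ) - (l : ℕ)), pB_mem_Qmod i _ _ (by omega)⟩ else 0), ?_⟩
    set vv : Fin 4 → ℂ := fun l => if h : (l : ℕ) ≤ (i : ℕ) then
        φ ⟨pA 4 (l : ℕ) ((i : ℕ) - (l : ℕ)), pA_mem_Qmod i _ _ (by omega)⟩ else 0 with hvv
    set ww : Fin 4 → ℂ := fun l => if h : (l : ℕ) < (i : ℕ) then
        -φ ⟨pB 4 (l : ℕ) ((i : ℕ) - (l : ℕ)), pB_mem_Qmod i _ _ (by omega)⟩ else 0 with hww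
    refine LinearMap.ext fun y => ?_
    have key : ∀ z (hz : z ∈ Submodule.span ℂ (TQ i)),
        ∀ hq : z ∈ Qmod i, gfun i (vv, ww) ⟨z, hq⟩ = φ ⟨z, hq⟩ := by
      intro z hz
      induction hz using Submodule.span_induction with
      | mem p hp =>
          intro hq
          obtain ⟨j, k, hjk, hp | hp⟩ := hp <;> subst hp
          · -- p = pA j k
            have hj4 : j < 4 := by have := i.2; omega
            rcases Nat.eq_zero_or_pos k with hk | hk
            · subst hk
              have h1 : SplusRho 4 (pA 4 j 0) vv i = vv ⟨j, hj4⟩ :=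
                rhoP_pA_at i j 0 hjk vv
              have h2 : SminusRho 4 (pA 4 j 0) ww i = ww ⟨j, hj4⟩ := by
                rw [pA_zero, ← pB_zero]
                exact rhoM_pB_at i j 0 hjk ww
              rw [gfun_apply, h1, h2]
              have hv : vv ⟨j, hj4⟩
                  = φ ⟨pA 4 j ((i : ℕ) - j), pA_mem_Qmod i _ _ (by omega)⟩ :=
                dif_pos (show j ≤ (i : ℕ) by omega)
              have hw : ww ⟨j, hj4⟩ = 0 := dif_neg (show ¬ j < (i : ℕ) by omega)
              rw [hv, hw, sub_zero]
              exact congrArg φ (Subtype.ext (by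
                show pA 4 j ((i : ℕ) - j) = pA 4 j 0
                rw [show (i : ℕ) - j = 0 by omega]))
            · have h1 : SplusRho 4 (pA 4 j k) vv i = vv ⟨j, hj4⟩ :=
                rhoP_pA_at i j k hjk vv
              have h2 : SminusRho 4 (pA 4 j k) ww i = 0 := by
                rw [rhoM_pA _ _ hk, LinearMap.zero_apply, Pi.zero_apply]
              rw [gfun_apply, h1, h2, sub_zero]
              have hv : vv ⟨j, hj4⟩
                  = φ ⟨pA 4 j ((i : ℕ) - j), pA_mem_Qmod i _ _ (by omega)⟩ :=
                dif_pos (show j ≤ (i : ℕ) by omega)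
              rw [hv]
              exact congrArg φ (Subtype.ext (by
                show pA 4 j ((i : ℕ) - j) = pA 4 j k
                rw [show (i : ℕ) - j = k by omega]))
          · -- p = pB j k
            have hj4 : j < 4 := by have := i.2; omega
            rcases Nat.eq_zero_or_pos k with hk | hk
            · subst hk
              have h1 : SplusRho 4 (pB 4 j 0) vv i = vv ⟨j, hj4⟩ := by
                rw [pB_zero, ← pA_zero]
                exact rhoP_pA_at i j 0 hjk vv
              have h2 : SminusRho 4 (pB 4 j 0) ww i = ww ⟨j, hj4⟩ :=
                rhoM_pB_at i j 0 hjk ww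
              rw [gfun_apply, h1, h2]
              have hv : vv ⟨j, hj4⟩
                  = φ ⟨pA 4 j ((i : ℕ) - j), pA_mem_Qmod i _ _ (by omega)⟩ :=
                dif_pos (show j ≤ (i : ℕ) by omega)
              have hw : ww ⟨j, hj4⟩ = 0 := dif_neg (show ¬ j < (i : ℕ) by omega)
              rw [hv, hw, sub_zero]
              exact congrArg φ (Subtype.ext (by
                show pA 4 j ((i : ℕ) - j) = pB 4 j 0
                rw [show (i : ℕ) - j = 0 by omega, pA_zero, pB_zero]))
            · have h1 : SplusRho 4 (pB 4 j k) vv i = 0 := by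
                rw [rhoP_pB _ _ hk, LinearMap.zero_apply, Pi.zero_apply]
              have h2 : SminusRho 4 (pB 4 j k) ww i = ww ⟨j, hj4⟩ :=
                rhoM_pB_at i j k hjk ww
              rw [gfun_apply, h1, h2, zero_sub]
              have hw : ww ⟨j, hj4⟩
                  = -φ ⟨pB 4 j ((i : ℕ) - j), pB_mem_Qmod i _ _ (by omega)⟩ :=
                dif_pos (show j < (i : ℕ) by omega)
              rw [hw, neg_neg]
              exact congrArg φ (Subtype.ext (by
                show pB 4 j ((i : ℕ) - j) = pB 4 j k
                rw [show (i : ℕ) - j = k by omega]))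
      | zero =>
          intro hq
          rw [show (⟨0, hq⟩ : ↥(Qmod i)) = 0 from Subtype.ext rfl, map_zero, map_zero]
      | add x y hx hy ihx ihy =>
          intro hq
          have hxq : x ∈ Qmod i := span_TQ_le i hx
          have hyq : y ∈ Qmod i := span_TQ_le i hy
          rw [show (⟨x + y, hq⟩ : ↥(Qmod i)) = ⟨x, hxq⟩ + ⟨y, hyq⟩ from Subtype.ext rfl,
            map_add, map_add, ihx hxq, ihy hyq]
      | smul c x hx ihx =>
          intro hq
          have hxq : x ∈ Qmod i := span_TQ_le i hx
          rw [show (⟨c • x, hq⟩ : ↥(Qmod i)) = c • (⟨x, hxq⟩ : ↥(Qmod i)) from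
              Subtype.ext rfl, map_smul, map_smul, ihx hxq]
    have h := key (y : PathAlg 4) (Qmod_subset_span i y.2) y.2
    rw [show (⟨(y : PathAlg 4), y.2⟩ : ↥(Qmod i)) = y from Subtype.ext rfl] at h
    exact h

end CHS
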